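/- Let a, b, c be positive real numbers satisfying the strict triangle inequalities a < b + c, b < a + c, c < a + b together with a + b + c < 2π. Then 2·sin(a/2)·sin(b/2)·sin(c/2)/(sin((a+b-c)/2)·sin((a+c-b)/2)·sin((b+c-a)/2)) ≥ 2·sin((a+b)/4)·sin((a+c)/4)·sin((b+c)/4)/(sin(a/2)·sin(b/2)·sin(c/2)) ≥ 2, with equality throughout if and only if a = b = c. -/

import Mathlib

/-!
Write `s x = sin (x / 2)`. The half-chords `s a, s b, s c` of a spherical triangle satisfy the
triangle inequality, since
`s z = 2 sin (z/4) cos (z/4) ≤ 2 sin ((x+y)/4) cos ((x-y)/4) = s x + s y`.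
At the vertex opposite `c`, the identities `s a s b = sin² ((a+b)/4) - sin² ((a-b)/4)` and
`sin ((a+c-b)/2) sin ((b+c-a)/2) = s c ² - sin² ((a-b)/2)` turn this into
`sin² ((a+b)/4) sin ((a+c-b)/2) sin ((b+c-a)/2) ≤ s a s b s c ²`; the product of the three
vertex inequalities is the square of the first claim. The second is the product of the three
inequalities `s a s b ≤ sin² ((a+b)/4)`, each an equality only when the two sides are equal.
-/

open Real

theorem sin_add_mul_sin_sub (u v : ℝ) :
    sin (u + v) * sin (u - v) = sin u ^ 2 - sin v ^ 2 := by
  rw [sin_add, sin_sub]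
  linear_combination sin u ^ 2 * sin_sq_add_cos_sq v - sin v ^ 2 * sin_sq_add_cos_sq u

theorem sin_half_mul_sin_half (x y : ℝ) :
    sin (x / 2) * sin (y / 2) = sin ((x + y) / 4) ^ 2 - sin ((x - y) / 4) ^ 2 := by
  rw [← sin_add_mul_sin_sub]
  ring_nf

theorem sin_half_mul_sin_half_le (x y : ℝ) :
    sin (x / 2) * sin (y / 2) ≤ sin ((x + y) / 4) ^ 2 := by
  rw [sin_half_mul_sin_half]
  exact sub_le_self _ (sq_nonneg _)

theorem eq_of_sin_half_mul_sin_half_eq {x y : ℝ} (hxy : |x - y| < 4 * π)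
    (h : sin (x / 2) * sin (y / 2) = sin ((x + y) / 4) ^ 2) : x = y := by
  obtain ⟨hlo, hhi⟩ := abs_lt.1 hxy
  rw [sin_half_mul_sin_half, sub_eq_self, sq_eq_zero_iff,
    sin_eq_zero_iff_of_lt_of_lt (by linarith) (by linarith)] at h
  linarith

theorem sin_half_le_sin_half_add_sin_half {x y z : ℝ} (hxy : |x - y| ≤ z) (hz : z ≤ x + y)
    (hsum : x + y ≤ 2 * π) : sin (z / 2) ≤ sin (x / 2) + sin (y / 2) := by
  have hz0 : 0 ≤ z := (abs_nonneg _).trans hxy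
  have hsin : sin (z / 4) ≤ sin ((x + y) / 4) :=
    sin_le_sin_of_le_of_le_pi_div_two (by linarith [pi_pos]) (by linarith) (by linarith)
  have hcos : cos (z / 4) ≤ cos ((x - y) / 4) := by
    rw [← cos_abs ((x - y) / 4), abs_div, abs_of_pos (by norm_num : (0 : ℝ) < 4)]
    exact cos_le_cos_of_nonneg_of_le_pi (by positivity) (by linarith [pi_pos]) (by linarith)
  have hcos0 : 0 ≤ cos (z / 4) :=
    cos_nonneg_of_neg_pi_div_two_le_of_le (by linarith [pi_pos]) (by linarith)
  have hsin0 : 0 ≤ sin ((x + y) / 4) :=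
    sin_nonneg_of_nonneg_of_le_pi (by linarith) (by linarith)
  calc sin (z / 2) = 2 * sin (z / 4) * cos (z / 4) := by rw [← sin_two_mul]; ring_nf
    _ ≤ 2 * sin ((x + y) / 4) * cos ((x - y) / 4) := by gcongr
    _ = sin (x / 2) + sin (y / 2) := by rw [sin_add_sin]; ring_nf

theorem sq_sin_quarter_mul_le {x y z : ℝ} (hz : 0 ≤ sin (z / 2))
    (h : sin (z / 2) ≤ sin (x / 2) + sin (y / 2)) :
    sin ((x + y) / 4) ^ 2 * (sin ((x + z - y) / 2) * sin ((y + z - x) / 2)) ≤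
      sin (x / 2) * sin (y / 2) * sin (z / 2) ^ 2 := by
  have hsum : sin (x / 2) + sin (y / 2) = 2 * sin ((x + y) / 4) * cos ((x - y) / 4) := by
    rw [sin_add_sin]; ring_nf
  have hdiff : sin ((x + z - y) / 2) * sin ((y + z - x) / 2) =
      sin (z / 2) ^ 2 - sin ((x - y) / 2) ^ 2 := by
    rw [← sin_add_mul_sin_sub]; ring_nf
  have hdouble : sin ((x - y) / 2) = 2 * sin ((x - y) / 4) * cos ((x - y) / 4) := by
    rw [← sin_two_mul]; ring_nf
  have hsq := pow_le_pow_left₀ hz h 2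
  rw [hsum] at hsq
  rw [hdiff, hdouble, sin_half_mul_sin_half]
  -- the right side minus the left side is `sin² ((x-y)/4) * ((s x + s y)² - s z²)`
  linear_combination mul_le_mul_of_nonneg_left hsq (sq_nonneg (sin ((x - y) / 4)))

theorem sq_sin_quarter_mul_le_of_lt {x y z : ℝ} (hx : x < y + z) (hy : y < x + z)
    (hz : z < x + y) (hsum : x + y + z < 2 * π) :
    sin ((x + y) / 4) ^ 2 * (sin ((x + z - y) / 2) * sin ((y + z - x) / 2)) ≤
      sin (x / 2) * sin (y / 2) * sin (z / 2) ^ 2 :=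
  sq_sin_quarter_mul_le (sin_pos_of_pos_of_lt_pi (by linarith) (by linarith)).le
    (sin_half_le_sin_half_add_sin_half (abs_sub_le_iff.2 ⟨by linarith, by linarith⟩) hz.le
      (by linarith))

theorem sin_quarter_prod_mul_le {a b c : ℝ} (hab : a < b + c) (hbc : b < a + c)
    (hca : c < a + b) (hsum : a + b + c < 2 * π) :
    sin ((a + b) / 4) * sin ((a + c) / 4) * sin ((b + c) / 4) *
        (sin ((a + b - c) / 2) * sin ((a + c - b) / 2) * sin ((b + c - a) / 2)) ≤
      (sin (a / 2) * sin (b / 2) * sin (c / 2)) ^ 2 := by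
  have hA := sq_sin_quarter_mul_le_of_lt hab hbc hca hsum
  have hB := sq_sin_quarter_mul_le_of_lt (x := a) (y := c) (z := b)
    (by linarith) (by linarith) (by linarith) (by linarith)
  have hC := sq_sin_quarter_mul_le_of_lt (x := b) (y := c) (z := a)
    (by linarith) (by linarith) (by linarith) (by linarith)
  rw [add_comm c b] at hB
  rw [add_comm b a, add_comm c a] at hC
  have : 0 < sin (a / 2) := sin_pos_of_pos_of_lt_pi (by linarith) (by linarith)
  have : 0 < sin (b / 2) := sin_pos_of_pos_of_lt_pi (by linarith) (by linarith)
  have : 0 < sin (c / 2) := sin_pos_of_pos_of_lt_pi (by linarith) (by linarith)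
  have : 0 < sin ((a + b - c) / 2) := sin_pos_of_pos_of_lt_pi (by linarith) (by linarith)
  have : 0 < sin ((a + c - b) / 2) := sin_pos_of_pos_of_lt_pi (by linarith) (by linarith)
  have : 0 < sin ((b + c - a) / 2) := sin_pos_of_pos_of_lt_pi (by linarith) (by linarith)
  refine le_of_pow_le_pow_left₀ two_ne_zero (sq_nonneg _) ?_
  calc _ = sin ((a + b) / 4) ^ 2 * (sin ((a + c - b) / 2) * sin ((b + c - a) / 2)) *
        (sin ((a + c) / 4) ^ 2 * (sin ((a + b - c) / 2) * sin ((b + c - a) / 2))) *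
        (sin ((b + c) / 4) ^ 2 * (sin ((a + b - c) / 2) * sin ((a + c - b) / 2))) := by ring
    _ ≤ sin (a / 2) * sin (b / 2) * sin (c / 2) ^ 2 *
        (sin (a / 2) * sin (c / 2) * sin (b / 2) ^ 2) *
        (sin (b / 2) * sin (c / 2) * sin (a / 2) ^ 2) := by gcongr ?_ * ?_ * ?_
    _ = _ := by ring

theorem sin_half_prod_le_sin_quarter_prod {a b c : ℝ} (hab : a < b + c) (hbc : b < a + c)
    (hca : c < a + b) (hsum : a + b + c < 2 * π) :
    sin (a / 2) * sin (b / 2) * sin (c / 2) ≤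
      sin ((a + b) / 4) * sin ((a + c) / 4) * sin ((b + c) / 4) := by
  have : 0 < sin (a / 2) := sin_pos_of_pos_of_lt_pi (by linarith) (by linarith)
  have : 0 < sin (b / 2) := sin_pos_of_pos_of_lt_pi (by linarith) (by linarith)
  have : 0 < sin (c / 2) := sin_pos_of_pos_of_lt_pi (by linarith) (by linarith)
  have : 0 < sin ((a + b) / 4) := sin_pos_of_pos_of_lt_pi (by linarith) (by linarith)
  have : 0 < sin ((a + c) / 4) := sin_pos_of_pos_of_lt_pi (by linarith) (by linarith)
  have : 0 < sin ((b + c) / 4) := sin_pos_of_pos_of_lt_pi (by linarith) (by linarith)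
  refine le_of_pow_le_pow_left₀ two_ne_zero (by positivity) ?_
  calc _ = sin (a / 2) * sin (b / 2) * (sin (a / 2) * sin (c / 2)) *
        (sin (b / 2) * sin (c / 2)) := by ring
    _ ≤ sin ((a + b) / 4) ^ 2 * sin ((a + c) / 4) ^ 2 * sin ((b + c) / 4) ^ 2 := by
      gcongr ?_ * ?_ * ?_ <;> exact sin_half_mul_sin_half_le _ _
    _ = _ := by ring

theorem eq_and_eq_of_sin_quarter_prod_eq {a b c : ℝ} (hab : a < b + c) (hbc : b < a + c)
    (hca : c < a + b) (hsum : a + b + c < 2 * π)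
    (h : sin ((a + b) / 4) * sin ((a + c) / 4) * sin ((b + c) / 4) =
      sin (a / 2) * sin (b / 2) * sin (c / 2)) :
    a = b ∧ b = c := by
  have : 0 < sin (a / 2) := sin_pos_of_pos_of_lt_pi (by linarith) (by linarith)
  have : 0 < sin (b / 2) := sin_pos_of_pos_of_lt_pi (by linarith) (by linarith)
  have : 0 < sin (c / 2) := sin_pos_of_pos_of_lt_pi (by linarith) (by linarith)
  have hsq : sin (a / 2) * sin (b / 2) * (sin (a / 2) * sin (c / 2)) *
      (sin (b / 2) * sin (c / 2)) =
        sin ((a + b) / 4) ^ 2 * sin ((a + c) / 4) ^ 2 * sin ((b + c) / 4) ^ 2 := by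
    calc _ = (sin (a / 2) * sin (b / 2) * sin (c / 2)) ^ 2 := by ring
      _ = (sin ((a + b) / 4) * sin ((a + c) / 4) * sin ((b + c) / 4)) ^ 2 := by rw [h]
      _ = _ := by ring
  have hab_le := sin_half_mul_sin_half_le a b
  have hac_le := sin_half_mul_sin_half_le a c
  have hbc_le := sin_half_mul_sin_half_le b c
  obtain ⟨habac_eq, hbc_eq⟩ := (mul_eq_mul_iff_eq_and_eq_of_pos
    (mul_le_mul hab_le hac_le (by positivity) (by positivity)) hbc_le
    (by positivity) ((by positivity : 0 < sin (b / 2) * sin (c / 2)).trans_le hbc_le)).1 hsq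
  obtain ⟨hab_eq, -⟩ := (mul_eq_mul_iff_eq_and_eq_of_pos hab_le hac_le
    (by positivity) ((by positivity : 0 < sin (a / 2) * sin (c / 2)).trans_le hac_le)).1 habac_eq
  exact ⟨eq_of_sin_half_mul_sin_half_eq (abs_lt.2 ⟨by linarith, by linarith⟩) hab_eq,
    eq_of_sin_half_mul_sin_half_eq (abs_lt.2 ⟨by linarith, by linarith⟩) hbc_eq⟩

theorem stmt_10_general (a b c : ℝ)
    (hab : a < b + c) (hbc : b < a + c) (hca : c < a + b)
    (hsum : a + b + c < 2 * Real.pi) :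
    2 * Real.sin (a / 2) * Real.sin (b / 2) * Real.sin (c / 2) /
        (Real.sin ((a + b - c) / 2) * Real.sin ((a + c - b) / 2) *
          Real.sin ((b + c - a) / 2)) ≥
      2 * Real.sin ((a + b) / 4) * Real.sin ((a + c) / 4) * Real.sin ((b + c) / 4) /
        (Real.sin (a / 2) * Real.sin (b / 2) * Real.sin (c / 2)) ∧
    2 * Real.sin ((a + b) / 4) * Real.sin ((a + c) / 4) * Real.sin ((b + c) / 4) /
        (Real.sin (a / 2) * Real.sin (b / 2) * Real.sin (c / 2)) ≥ 2 ∧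
    ((2 * Real.sin (a / 2) * Real.sin (b / 2) * Real.sin (c / 2) /
        (Real.sin ((a + b - c) / 2) * Real.sin ((a + c - b) / 2) *
          Real.sin ((b + c - a) / 2)) =
      2 * Real.sin ((a + b) / 4) * Real.sin ((a + c) / 4) * Real.sin ((b + c) / 4) /
        (Real.sin (a / 2) * Real.sin (b / 2) * Real.sin (c / 2)) ∧
      2 * Real.sin ((a + b) / 4) * Real.sin ((a + c) / 4) * Real.sin ((b + c) / 4) /
        (Real.sin (a / 2) * Real.sin (b / 2) * Real.sin (c / 2)) = 2) ↔
      a = b ∧ b = c) := by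
  have hS : 0 < sin (a / 2) * sin (b / 2) * sin (c / 2) := by
    apply_rules [mul_pos, sin_pos_of_pos_of_lt_pi] <;> linarith
  have hT : 0 < sin ((a + b - c) / 2) * sin ((a + c - b) / 2) * sin ((b + c - a) / 2) := by
    apply_rules [mul_pos, sin_pos_of_pos_of_lt_pi] <;> linarith
  refine ⟨?_, ?_, ⟨fun h => eq_and_eq_of_sin_quarter_prod_eq hab hbc hca hsum ?_, ?_⟩⟩
  · rw [ge_iff_le, div_le_div_iff₀ hS hT]
    linear_combination 2 * sin_quarter_prod_mul_le hab hbc hca hsum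
  · rw [ge_iff_le, le_div_iff₀ hS]
    linear_combination 2 * sin_half_prod_le_sin_quarter_prod hab hbc hca hsum
  · linear_combination (div_eq_iff hS.ne').1 h.2 / 2
  · rintro ⟨rfl, rfl⟩
    have : sin (a / 2) ≠ 0 := (sin_pos_of_pos_of_lt_pi (by linarith) (by linarith)).ne'
    rw [show (a + a - a) / 2 = a / 2 by ring, show (a + a) / 4 = a / 2 by ring]
    constructor <;> field_simp

theorem stmt_10 (a b c : ℝ) (ha : 0 < a) (hb : 0 < b) (hc : 0 < c)
    (hab : a < b + c) (hbc : b < a + c) (hca : c < a + b)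
    (hsum : a + b + c < 2 * Real.pi) :
    2 * Real.sin (a / 2) * Real.sin (b / 2) * Real.sin (c / 2) /
        (Real.sin ((a + b - c) / 2) * Real.sin ((a + c - b) / 2) *
          Real.sin ((b + c - a) / 2)) ≥
      2 * Real.sin ((a + b) / 4) * Real.sin ((a + c) / 4) * Real.sin ((b + c) / 4) /
        (Real.sin (a / 2) * Real.sin (b / 2) * Real.sin (c / 2)) ∧
    2 * Real.sin ((a + b) / 4) * Real.sin ((a + c) / 4) * Real.sin ((b + c) / 4) /
        (Real.sin (a / 2) * Real.sin (b / 2) * Real.sin (c / 2)) ≥ 2 ∧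
    ((2 * Real.sin (a / 2) * Real.sin (b / 2) * Real.sin (c / 2) /
        (Real.sin ((a + b - c) / 2) * Real.sin ((a + c - b) / 2) *
          Real.sin ((b + c - a) / 2)) =
      2 * Real.sin ((a + b) / 4) * Real.sin ((a + c) / 4) * Real.sin ((b + c) / 4) /
        (Real.sin (a / 2) * Real.sin (b / 2) * Real.sin (c / 2)) ∧
      2 * Real.sin ((a + b) / 4) * Real.sin ((a + c) / 4) * Real.sin ((b + c) / 4) /
        (Real.sin (a / 2) * Real.sin (b / 2) * Real.sin (c / 2)) = 2) ↔
      a = b ∧ b = c) :=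
  stmt_10_general a b c hab hbc hca hsum
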